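/- arXiv:1909.02987 — 7 statements merged into one kernel-verified Lean document; each statement's English description precedes it below -/
import Mathlib

section
/- If {T_j}_{j∈J} is a family of bounded operators on a Hilbert space H with closed range such that A‖f‖² ≤ Σ_j ‖T_j f‖² ≤ B‖f‖² for all f ∈ H (with A, B > 0), and for each j the set {T_j g_{jk} : k ∈ K} is a frame for the subspace T_j(H) with uniform frame bounds α, β, then {T_j* T_j g_{jk} : j ∈ J, k ∈ K} is a frame for H with frame bounds αA and βB. -/
open scoped RealInnerProductSpace

/-- Were `u` not summable, its sum would be the junk value `0`. -/
lemma summable_of_mul_norm_sq_le_tsum {ι E : Type*} [NormedAddCommGroup E] {c : ℝ} (hc : 0 < c)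
    {u : ι → ℝ} {x : E} (hzero : x = 0 → ∀ i, u i = 0) (h : c * ‖x‖ ^ 2 ≤ ∑' i, u i) :
    Summable u := by
  by_cases hx : x = 0
  · simp only [funext (hzero hx)]
    exact summable_zero
  by_contra hu
  rw [tsum_eq_zero_of_not_summable hu] at h
  have : 0 < c * ‖x‖ ^ 2 := by positivity
  linarith

lemma tsum_prod_bounds_of_fibre_bounds {J K : Type*} {a : J → ℝ} {b : J → K → ℝ} {α β : ℝ}
    (hb_nonneg : ∀ j k, 0 ≤ b j k) (hb : ∀ j, Summable (b j)) (ha : Summable a)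
    (hlower : ∀ j, α * a j ≤ ∑' k, b j k) (hupper : ∀ j, ∑' k, b j k ≤ β * a j) :
    α * ∑' j, a j ≤ ∑' p : J × K, b p.1 p.2 ∧ ∑' p : J × K, b p.1 p.2 ≤ β * ∑' j, a j := by
  have hfibres : Summable fun j => ∑' k, b j k :=
    (ha.mul_left β).of_nonneg_of_le (fun j => tsum_nonneg (hb_nonneg j)) hupper
  have hprod : Summable fun p : J × K => b p.1 p.2 :=
    (summable_prod_of_nonneg fun p => hb_nonneg p.1 p.2).mpr ⟨hb, hfibres⟩
  rw [hprod.tsum_prod' hb, ← tsum_mul_left, ← tsum_mul_left]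
  exact ⟨(ha.mul_left α).tsum_le_tsum hlower hfibres, hfibres.tsum_le_tsum hupper (ha.mul_left β)⟩

theorem stmt0_general {H : Type*} [NormedAddCommGroup H] [InnerProductSpace ℝ H] [CompleteSpace H]
    {J K : Type*}
    (T : J → H →L[ℝ] H)
    (g : J → K → H) (A B α β : ℝ) (hA : 0 < A) (hα : 0 < α) (hβ : 0 < β)
    (hfusion : ∀ f : H, A * ‖f‖ ^ 2 ≤ ∑' j, ‖T j f‖ ^ 2 ∧ ∑' j, ‖T j f‖ ^ 2 ≤ B * ‖f‖ ^ 2)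
    (hlocal : ∀ j, ∀ f ∈ Set.range (T j),
      α * ‖f‖ ^ 2 ≤ ∑' k, ⟪f, T j (g j k)⟫ ^ 2 ∧ ∑' k, ⟪f, T j (g j k)⟫ ^ 2 ≤ β * ‖f‖ ^ 2) :
    ∀ f : H,
      α * A * ‖f‖ ^ 2 ≤ ∑' p : J × K, ⟪f, (T p.1).adjoint (T p.1 (g p.1 p.2))⟫ ^ 2 ∧
      ∑' p : J × K, ⟪f, (T p.1).adjoint (T p.1 (g p.1 p.2))⟫ ^ 2 ≤ β * B * ‖f‖ ^ 2 := by
  intro f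
  simp only [ContinuousLinearMap.adjoint_inner_right]
  have hlocal_f j := hlocal j (T j f) ⟨f, rfl⟩
  have hfibres j : Summable fun k => ⟪T j f, T j (g j k)⟫ ^ 2 :=
    summable_of_mul_norm_sq_le_tsum hα (fun h k => by simp [h]) (hlocal_f j).1
  have hnorms : Summable fun j => ‖T j f‖ ^ 2 :=
    summable_of_mul_norm_sq_le_tsum hA (fun h j => by simp [h]) (hfusion f).1
  obtain ⟨hlower, hupper⟩ := tsum_prod_bounds_of_fibre_bounds (fun _ _ => sq_nonneg _) hfibres
    hnorms (fun j => (hlocal_f j).1) (fun j => (hlocal_f j).2)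
  constructor
  · calc α * A * ‖f‖ ^ 2 = α * (A * ‖f‖ ^ 2) := by ring
      _ ≤ α * ∑' j, ‖T j f‖ ^ 2 := by gcongr; exact (hfusion f).1
      _ ≤ _ := hlower
  · calc _ ≤ β * ∑' j, ‖T j f‖ ^ 2 := hupper
      _ ≤ β * (B * ‖f‖ ^ 2) := by gcongr; exact (hfusion f).2
      _ = β * B * ‖f‖ ^ 2 := by ring

theorem stmt0 {H : Type*} [NormedAddCommGroup H] [InnerProductSpace ℝ H] [CompleteSpace H]
    {J K : Type*} [Countable J] [Countable K]
    (T : J → H →L[ℝ] H) (hrange : ∀ j, IsClosed (Set.range (T j)))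
    (g : J → K → H) (A B α β : ℝ) (hA : 0 < A) (hB : 0 < B) (hα : 0 < α) (hβ : 0 < β)
    (hfusion : ∀ f : H, A * ‖f‖ ^ 2 ≤ ∑' j, ‖T j f‖ ^ 2 ∧ ∑' j, ‖T j f‖ ^ 2 ≤ B * ‖f‖ ^ 2)
    (hlocal : ∀ j, ∀ f ∈ Set.range (T j),
      α * ‖f‖ ^ 2 ≤ ∑' k, ⟪f, T j (g j k)⟫ ^ 2 ∧ ∑' k, ⟪f, T j (g j k)⟫ ^ 2 ≤ β * ‖f‖ ^ 2) :
    ∀ f : H,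
      α * A * ‖f‖ ^ 2 ≤ ∑' p : J × K, ⟪f, (T p.1).adjoint (T p.1 (g p.1 p.2))⟫ ^ 2 ∧
      ∑' p : J × K, ⟪f, (T p.1).adjoint (T p.1 (g p.1 p.2))⟫ ^ 2 ≤ β * B * ‖f‖ ^ 2 :=
  stmt0_general T g A B α β hA hα hβ hfusion hlocal
end

section
/- Suppose for each j ∈ J the set {T_j g_{jk} : k ∈ K} is a frame for T_j(H) with uniform frame bounds α, β, and {T_j* T_j g_{jk} : j ∈ J, k ∈ K} is a frame for H with frame bounds αA and βB. Then (α/β)A ‖f‖² ≤ Σ_j ‖T_j f‖² ≤ (β/α)B ‖f‖² for all f ∈ H. -/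
/-!
Since `⟪f, T_j* T_j g_{jk}⟫ = ⟪T_j f, T_j g_{jk}⟫`, the `j`-th fibre of the global frame sum is the
local frame sum of `T_j f ∈ T_j(H)`, which lies between `α ‖T_j f‖²` and `β ‖T_j f‖²`. Summing over
`j` squeezes the global sum between `α ∑ ‖T_j f‖²` and `β ∑ ‖T_j f‖²`; comparing with the global
bounds `α A ‖f‖²` and `β B ‖f‖²` gives the claim.
-/

open scoped RealInnerProductSpace

section FiberwiseBounds

variable {J K : Type*} {F : J × K → ℝ} {u : J → ℝ} {a b : ℝ}

theorem summable_of_fiberwise_lower_bound (hF : Summable F) (hu : 0 ≤ u) (ha : 0 < a)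
    (hlow : ∀ j, a * u j ≤ ∑' k, F (j, k)) : Summable u :=
  Summable.of_nonneg_of_le hu (fun j => (le_inv_mul_iff₀ ha).2 (hlow j)) (hF.prod.mul_left a⁻¹)

theorem mul_tsum_le_tsum_of_fiberwise_lower_bound (hF : Summable F) (hu : 0 ≤ u) (ha : 0 < a)
    (hlow : ∀ j, a * u j ≤ ∑' k, F (j, k)) : a * ∑' j, u j ≤ ∑' p, F p := by
  rw [hF.tsum_prod, ← tsum_mul_left]
  exact ((summable_of_fiberwise_lower_bound hF hu ha hlow).mul_left a).tsum_le_tsum hlow hF.prod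

theorem tsum_le_mul_tsum_of_fiberwise_upper_bound (hF : Summable F) (hu : Summable u)
    (hup : ∀ j, ∑' k, F (j, k) ≤ b * u j) : ∑' p, F p ≤ b * ∑' j, u j := by
  rw [hF.tsum_prod, ← tsum_mul_left]
  exact hF.prod.tsum_le_tsum hup (hu.mul_left b)

end FiberwiseBounds

theorem stmt1_general {H : Type*} [NormedAddCommGroup H] [InnerProductSpace ℝ H] [CompleteSpace H]
    {J K : Type*}
    (T : J → H →L[ℝ] H)
    (g : J → K → H) (A B α β : ℝ) (hA : 0 < A) (hα : 0 < α) (hβ : 0 < β)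
    (hlocal : ∀ j, ∀ f ∈ Set.range (T j),
      α * ‖f‖ ^ 2 ≤ ∑' k, ⟪f, T j (g j k)⟫ ^ 2 ∧ ∑' k, ⟪f, T j (g j k)⟫ ^ 2 ≤ β * ‖f‖ ^ 2)
    (hglobal : ∀ f : H,
      α * A * ‖f‖ ^ 2 ≤ ∑' p : J × K, ⟪f, (T p.1).adjoint (T p.1 (g p.1 p.2))⟫ ^ 2 ∧
      ∑' p : J × K, ⟪f, (T p.1).adjoint (T p.1 (g p.1 p.2))⟫ ^ 2 ≤ β * B * ‖f‖ ^ 2) :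
    ∀ f : H,
      (α / β) * A * ‖f‖ ^ 2 ≤ ∑' j, ‖T j f‖ ^ 2 ∧
      ∑' j, ‖T j f‖ ^ 2 ≤ (β / α) * B * ‖f‖ ^ 2 := by
  intro f
  rcases eq_or_ne f 0 with rfl | hf
  · simp
  obtain ⟨hglobal_low, hglobal_up⟩ := hglobal f
  simp only [ContinuousLinearMap.adjoint_inner_right] at hglobal_low hglobal_up
  have hsummable : Summable fun p : J × K => ⟪T p.1 f, T p.1 (g p.1 p.2)⟫ ^ 2 := by
    by_contra h
    rw [tsum_eq_zero_of_not_summable h] at hglobal_low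
    have : 0 < α * A * ‖f‖ ^ 2 := by positivity
    linarith
  have hnorm_nonneg : 0 ≤ fun j => ‖T j f‖ ^ 2 := fun j => by positivity
  have hlocal_f j := hlocal j (T j f) ⟨f, rfl⟩
  have hlow := mul_tsum_le_tsum_of_fiberwise_lower_bound hsummable hnorm_nonneg hα
    (fun j => (hlocal_f j).1)
  have hup := tsum_le_mul_tsum_of_fiberwise_upper_bound hsummable
    (summable_of_fiberwise_lower_bound hsummable hnorm_nonneg hα fun j => (hlocal_f j).1)
    (fun j => (hlocal_f j).2)
  constructor
  · rw [div_mul_eq_mul_div, div_mul_eq_mul_div, div_le_iff₀ hβ]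
    linarith
  · rw [div_mul_eq_mul_div, div_mul_eq_mul_div, le_div_iff₀ hα]
    linarith

theorem stmt1 {H : Type*} [NormedAddCommGroup H] [InnerProductSpace ℝ H] [CompleteSpace H]
    {J K : Type*} [Countable J] [Countable K]
    (T : J → H →L[ℝ] H) (hrange : ∀ j, IsClosed (Set.range (T j)))
    (g : J → K → H) (A B α β : ℝ) (hA : 0 < A) (hB : 0 < B) (hα : 0 < α) (hβ : 0 < β)
    (hlocal : ∀ j, ∀ f ∈ Set.range (T j),
      α * ‖f‖ ^ 2 ≤ ∑' k, ⟪f, T j (g j k)⟫ ^ 2 ∧ ∑' k, ⟪f, T j (g j k)⟫ ^ 2 ≤ β * ‖f‖ ^ 2)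
    (hglobal : ∀ f : H,
      α * A * ‖f‖ ^ 2 ≤ ∑' p : J × K, ⟪f, (T p.1).adjoint (T p.1 (g p.1 p.2))⟫ ^ 2 ∧
      ∑' p : J × K, ⟪f, (T p.1).adjoint (T p.1 (g p.1 p.2))⟫ ^ 2 ≤ β * B * ‖f‖ ^ 2) :
    ∀ f : H,
      (α / β) * A * ‖f‖ ^ 2 ≤ ∑' j, ‖T j f‖ ^ 2 ∧
      ∑' j, ‖T j f‖ ^ 2 ≤ (β / α) * B * ‖f‖ ^ 2 :=
  stmt1_general T g A B α β hA hα hβ hlocal hglobal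
end

section
/- If {P_j}_{j∈J} are orthogonal projections forming a fusion frame with bounds A, B, and for each j the set {P_j g_{jk} : k ∈ K} is a frame for P_j(H) with uniform frame bounds α, β, then {P_j g_{jk} : j ∈ J, k ∈ K} is a frame for H with frame bounds αA and βB. -/
/-! Since `P j` is an orthogonal projection, `⟪f, P j x⟫ = ⟪P j f, P j x⟫`, so the local frame
bounds applied to `P j f` give `α ‖P j f‖² ≤ ∑ₖ ⟪f, P j (g j k)⟫² ≤ β ‖P j f‖²`. Summing over `j`
and using the fusion frame bounds `A ‖f‖² ≤ ∑ⱼ ‖P j f‖² ≤ B ‖f‖²` gives the claim; for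
nonnegative real families the double sum is the sum over `J × K`. -/

open scoped RealInnerProductSpace

lemma summable_of_pos_le_tsum {ι : Type*} {u : ι → ℝ} {c : ℝ} (hc : 0 < c)
    (h : c ≤ ∑' i, u i) : Summable u := by
  by_contra hu
  rw [tsum_eq_zero_of_not_summable hu] at h
  linarith

lemma tsum_prod_bounds_of_fiberwise {J K : Type*} {u : J × K → ℝ} {w : J → ℝ} {α β : ℝ}
    (hu : 0 ≤ u) (hw : Summable w) (hfiber : ∀ j, Summable fun k => u (j, k))
    (hlow : ∀ j, α * w j ≤ ∑' k, u (j, k)) (hup : ∀ j, ∑' k, u (j, k) ≤ β * w j) :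
    α * ∑' j, w j ≤ ∑' p, u p ∧ ∑' p, u p ≤ β * ∑' j, w j := by
  have hfibers : Summable fun j => ∑' k, u (j, k) :=
    (hw.mul_left β).of_nonneg_of_le (fun j => tsum_nonneg fun k => hu _) hup
  have hprod : ∑' p, u p = ∑' j, ∑' k, u (j, k) :=
    ((summable_prod_of_nonneg hu).mpr ⟨hfiber, hfibers⟩).tsum_prod' hfiber
  rw [hprod, ← tsum_mul_left, ← tsum_mul_left]
  exact ⟨(hw.mul_left α).tsum_le_tsum hlow hfibers, hfibers.tsum_le_tsum hup (hw.mul_left β)⟩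

section

variable {H : Type*} [NormedAddCommGroup H] [InnerProductSpace ℝ H]

lemma inner_apply_eq_inner_apply_apply [CompleteSpace H] {P : H →L[ℝ] H} (hsa : IsSelfAdjoint P)
    (hidem : IsIdempotentElem P) (f x : H) : ⟪f, P x⟫ = ⟪P f, P x⟫ := by
  have hPP : P (P x) = P x := congrArg (fun T : H →L[ℝ] H => T x) hidem
  calc ⟪f, P x⟫ = ⟪f, P (P x)⟫ := by rw [hPP]
    _ = ⟪P f, P x⟫ := (ContinuousLinearMap.isSelfAdjoint_iff_isSymmetric.mp hsa f (P x)).symm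

lemma summable_inner_sq_of_lower_frame_bound {K : Type*} {v : K → H} {α : ℝ} (hα : 0 < α)
    {f : H} (h : α * ‖f‖ ^ 2 ≤ ∑' k, ⟪f, v k⟫ ^ 2) : Summable fun k => ⟪f, v k⟫ ^ 2 := by
  rcases eq_or_ne f 0 with rfl | hf
  · simp
  · exact summable_of_pos_le_tsum (by positivity) h

lemma summable_norm_apply_sq_of_lower_fusion_bound {J : Type*} {P : J → H →L[ℝ] H} {A : ℝ}
    (hA : 0 < A) {f : H} (h : A * ‖f‖ ^ 2 ≤ ∑' j, ‖P j f‖ ^ 2) :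
    Summable fun j => ‖P j f‖ ^ 2 := by
  rcases eq_or_ne f 0 with rfl | hf
  · simp
  · exact summable_of_pos_le_tsum (by positivity) h

end

theorem stmt2_general {H : Type*} [NormedAddCommGroup H] [InnerProductSpace ℝ H] [CompleteSpace H]
    {J K : Type*}
    (P : J → H →L[ℝ] H) (hsa : ∀ j, IsSelfAdjoint (P j)) (hidem : ∀ j, IsIdempotentElem (P j))
    (g : J → K → H) (A B α β : ℝ) (hA : 0 < A) (hα : 0 < α) (hβ : 0 < β)
    (hfusion : ∀ f : H, A * ‖f‖ ^ 2 ≤ ∑' j, ‖P j f‖ ^ 2 ∧ ∑' j, ‖P j f‖ ^ 2 ≤ B * ‖f‖ ^ 2)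
    (hlocal : ∀ j, ∀ f ∈ Set.range (P j),
      α * ‖f‖ ^ 2 ≤ ∑' k, ⟪f, P j (g j k)⟫ ^ 2 ∧ ∑' k, ⟪f, P j (g j k)⟫ ^ 2 ≤ β * ‖f‖ ^ 2) :
    ∀ f : H,
      α * A * ‖f‖ ^ 2 ≤ ∑' p : J × K, ⟪f, P p.1 (g p.1 p.2)⟫ ^ 2 ∧
      ∑' p : J × K, ⟪f, P p.1 (g p.1 p.2)⟫ ^ 2 ≤ β * B * ‖f‖ ^ 2 := by
  intro f
  have hproj j x : ⟪f, P j x⟫ = ⟪P j f, P j x⟫ :=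
    inner_apply_eq_inner_apply_apply (hsa j) (hidem j) f x
  have hlocal' j : α * ‖P j f‖ ^ 2 ≤ ∑' k, ⟪f, P j (g j k)⟫ ^ 2 ∧
      ∑' k, ⟪f, P j (g j k)⟫ ^ 2 ≤ β * ‖P j f‖ ^ 2 := by
    simpa only [← hproj] using hlocal j (P j f) ⟨f, rfl⟩
  have hfiber j : Summable fun k => ⟪f, P j (g j k)⟫ ^ 2 := by
    simpa only [← hproj] using
      summable_inner_sq_of_lower_frame_bound hα (hlocal j (P j f) ⟨f, rfl⟩).1
  obtain ⟨hlow, hup⟩ := tsum_prod_bounds_of_fiberwise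
    (u := fun p : J × K => ⟪f, P p.1 (g p.1 p.2)⟫ ^ 2) (fun p => sq_nonneg _)
    (summable_norm_apply_sq_of_lower_fusion_bound hA (hfusion f).1) hfiber
    (fun j => (hlocal' j).1) (fun j => (hlocal' j).2)
  constructor
  · calc α * A * ‖f‖ ^ 2 = α * (A * ‖f‖ ^ 2) := mul_assoc _ _ _
      _ ≤ α * ∑' j, ‖P j f‖ ^ 2 := mul_le_mul_of_nonneg_left (hfusion f).1 hα.le
      _ ≤ _ := hlow
  · calc _ ≤ β * ∑' j, ‖P j f‖ ^ 2 := hup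
      _ ≤ β * (B * ‖f‖ ^ 2) := mul_le_mul_of_nonneg_left (hfusion f).2 hβ.le
      _ = β * B * ‖f‖ ^ 2 := (mul_assoc _ _ _).symm

theorem stmt2 {H : Type*} [NormedAddCommGroup H] [InnerProductSpace ℝ H] [CompleteSpace H]
    {J K : Type*} [Countable J] [Countable K]
    (P : J → H →L[ℝ] H) (hsa : ∀ j, IsSelfAdjoint (P j)) (hidem : ∀ j, IsIdempotentElem (P j))
    (g : J → K → H) (A B α β : ℝ) (hA : 0 < A) (hB : 0 < B) (hα : 0 < α) (hβ : 0 < β)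
    (hfusion : ∀ f : H, A * ‖f‖ ^ 2 ≤ ∑' j, ‖P j f‖ ^ 2 ∧ ∑' j, ‖P j f‖ ^ 2 ≤ B * ‖f‖ ^ 2)
    (hlocal : ∀ j, ∀ f ∈ Set.range (P j),
      α * ‖f‖ ^ 2 ≤ ∑' k, ⟪f, P j (g j k)⟫ ^ 2 ∧ ∑' k, ⟪f, P j (g j k)⟫ ^ 2 ≤ β * ‖f‖ ^ 2) :
    ∀ f : H,
      α * A * ‖f‖ ^ 2 ≤ ∑' p : J × K, ⟪f, P p.1 (g p.1 p.2)⟫ ^ 2 ∧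
      ∑' p : J × K, ⟪f, P p.1 (g p.1 p.2)⟫ ^ 2 ≤ β * B * ‖f‖ ^ 2 :=
  stmt2_general P hsa hidem g A B α β hA hα hβ hfusion hlocal
end

section
/- Let {P_j}_{j∈ℕ} be orthogonal projections on a Hilbert space H such that P_j P_k = P_k P_j for all j, k, and P_j P_k = 0 whenever |j−k| ≥ M for some positive integer M. If the family is complete (i.e., P_j f = 0 for all j implies f = 0), then {P_j}_{j∈ℕ} is a fusion frame; in fact ‖f‖² ≤ Σ_j ‖P_j f‖² ≤ M‖f‖² for all f ∈ H. -/
/-!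
Upper bound: projections whose indices are congruent mod `M` are mutually orthogonal, so their
sum is again a projection and each of the `M` residue classes contributes at most `‖f‖²`.

Lower bound: for commuting projections, `J n = P₀ ∨ ⋯ ∨ P_{n-1}` satisfies
`J (n+1) = J n + (1 - J n) P n` with orthogonal summands, hence
`‖J n f‖² ≤ ∑_{j<n} ‖P j f‖²`. The `J n` increase, and completeness says that their ranges are
dense, so `J n f → f`.
-/

open Filter Topology Finset
open scoped InnerProductSpace

section Ring

variable {R : Type*} [Ring R]

/-- For commuting projections `p j`, `partialJoin p n` is the projection onto the closed span of
the ranges of `p 0, …, p (n-1)`. -/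
def partialJoin (p : ℕ → R) : ℕ → R
  | 0 => 0
  | n + 1 => partialJoin p n + p n - partialJoin p n * p n

variable {p : ℕ → R}

lemma commute_partialJoin (hcomm : ∀ j k, Commute (p j) (p k)) (j n : ℕ) :
    Commute (p j) (partialJoin p n) := by
  induction n with
  | zero => exact Commute.zero_right _
  | succ n ih => exact (ih.add_right (hcomm j n)).sub_right (ih.mul_right (hcomm j n))

lemma partialJoin_succ_mul_self (hp : ∀ j, IsIdempotentElem (p j)) (n : ℕ) :
    partialJoin p (n + 1) * p n = p n := by
  simp only [partialJoin, sub_mul, add_mul, mul_assoc, (hp n).eq]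
  abel

lemma partialJoin_succ_mul_partialJoin (hcomm : ∀ j k, Commute (p j) (p k))
    {n : ℕ} (hJ : IsIdempotentElem (partialJoin p n)) :
    partialJoin p (n + 1) * partialJoin p n = partialJoin p n := by
  simp only [partialJoin, sub_mul, add_mul, mul_assoc, (commute_partialJoin hcomm n n).eq, hJ.eq]
  simp only [← mul_assoc, hJ.eq]
  abel

variable [StarRing R]

lemma isStarProjection_partialJoin (hp : ∀ j, IsStarProjection (p j))
    (hcomm : ∀ j k, Commute (p j) (p k)) (n : ℕ) : IsStarProjection (partialJoin p n) := by
  induction n with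
  | zero => exact IsStarProjection.zero R
  | succ n ih => exact ih.add_sub_mul_of_commute (commute_partialJoin hcomm n n).symm (hp n)

lemma IsStarProjection.sum {ι : Type*} {s : Finset ι} {q : ι → R}
    (hq : ∀ i ∈ s, IsStarProjection (q i)) (horth : ∀ i ∈ s, ∀ j ∈ s, i ≠ j → q i * q j = 0) :
    IsStarProjection (∑ i ∈ s, q i) := by
  classical
  induction s using Finset.induction_on with
  | empty => simp
  | insert a s ha ih =>
    rw [sum_insert ha]
    refine (hq a (mem_insert_self a s)).add
      (ih (fun i hi => hq i (mem_insert_of_mem hi))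
        (fun i hi j hj => horth i (mem_insert_of_mem hi) j (mem_insert_of_mem hj))) ?_
    rw [mul_sum]
    exact sum_eq_zero fun j hj =>
      horth a (mem_insert_self a s) j (mem_insert_of_mem hj) (ne_of_mem_of_not_mem hj ha).symm

end Ring

section Hilbert

variable {𝕜 H : Type*} [RCLike 𝕜] [NormedAddCommGroup H] [InnerProductSpace 𝕜 H] [CompleteSpace H]

lemma IsStarProjection.inner_apply_self {p : H →L[𝕜] H} (hp : IsStarProjection p) (x : H) :
    ⟪p x, x⟫_𝕜 = (‖p x‖ ^ 2 : 𝕜) := by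
  calc ⟪p x, x⟫_𝕜 = ⟪p (p x), x⟫_𝕜 := by rw [← mul_apply_eq_comp, hp.isIdempotentElem.eq]
    _ = ⟪p x, p x⟫_𝕜 := hp.isSelfAdjoint.isSymmetric (p x) x
    _ = (‖p x‖ ^ 2 : 𝕜) := inner_self_eq_norm_sq_to_K _

lemma IsStarProjection.norm_apply_le {p : H →L[𝕜] H} (hp : IsStarProjection p) (x : H) :
    ‖p x‖ ≤ ‖x‖ :=
  (p.le_of_opNorm_le (IsStarProjection.norm_le p hp) x).trans_eq (one_mul _)

lemma sum_norm_apply_sq_le {ι : Type*} {s : Finset ι} {p : ι → H →L[𝕜] H}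
    (hp : ∀ i ∈ s, IsStarProjection (p i)) (horth : ∀ i ∈ s, ∀ j ∈ s, i ≠ j → p i * p j = 0)
    (x : H) : ∑ i ∈ s, ‖p i x‖ ^ 2 ≤ ‖x‖ ^ 2 := by
  have hsum := IsStarProjection.sum hp horth
  have : ∑ i ∈ s, ‖p i x‖ ^ 2 = ‖(∑ i ∈ s, p i) x‖ ^ 2 := by
    apply RCLike.ofReal_injective (K := 𝕜)
    simp only [RCLike.ofReal_sum, RCLike.ofReal_pow]
    rw [← hsum.inner_apply_self, _root_.sum_apply, sum_inner]
    exact sum_congr rfl fun i hi => ((hp i hi).inner_apply_self x).symm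
  rw [this]
  exact pow_le_pow_left₀ (norm_nonneg _) (hsum.norm_apply_le x) 2

lemma sum_norm_apply_sq_le_card_mul {ι κ : Type*} [DecidableEq κ] {p : ι → H →L[𝕜] H}
    (hp : ∀ i, IsStarProjection (p i)) (c : ι → κ)
    (horth : ∀ i j, c i = c j → i ≠ j → p i * p j = 0) {s : Finset ι} {t : Finset κ}
    (hst : ∀ i ∈ s, c i ∈ t) (x : H) :
    ∑ i ∈ s, ‖p i x‖ ^ 2 ≤ #t * ‖x‖ ^ 2 := by
  rw [← sum_fiberwise_of_maps_to hst, ← nsmul_eq_mul]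
  refine sum_le_card_nsmul _ _ _ fun k _ => sum_norm_apply_sq_le (fun i _ => hp i) ?_ x
  intro i hi j hj hij
  exact horth i j ((mem_filter.mp hi).2.trans (mem_filter.mp hj).2.symm) hij

lemma tendsto_apply_of_isStarProjection_of_mul_eq {Q : ℕ → H →L[𝕜] H}
    (hQ : ∀ n, IsStarProjection (Q n)) (hmono : ∀ n, Q (n + 1) * Q n = Q n)
    (hsep : ∀ y, (∀ n, Q n y = 0) → y = 0) (x : H) :
    Tendsto (fun n => Q n x) atTop (𝓝 x) := by
  choose _ hQ_eq using fun n => isStarProjection_iff_eq_starProjection_range.mp (hQ n)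
  have hU : Monotone fun n => (Q n).range := monotone_nat_of_le_succ fun n => by
    rintro _ ⟨y, rfl⟩
    exact ⟨Q n y, DFunLike.congr_fun (hmono n) y⟩
  have hdense : ⊤ ≤ (⨆ n, (Q n).range).topologicalClosure := by
    rw [← Submodule.orthogonal_orthogonal_eq_closure, ← Submodule.iInf_orthogonal]
    refine ((Submodule.orthogonal_eq_top_iff _).mpr (eq_bot_iff.mpr fun y hy => ?_)).ge
    refine (Submodule.mem_bot 𝕜).mpr (hsep y fun n => ?_)
    rw [hQ_eq n, Submodule.starProjection_apply_eq_zero_iff]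
    exact Submodule.mem_iInf _ |>.mp hy n
  simpa only [← hQ_eq] using Submodule.starProjection_tendsto_self _ hU x hdense

lemma norm_partialJoin_apply_sq_le {p : ℕ → H →L[𝕜] H} (hp : ∀ j, IsStarProjection (p j))
    (hcomm : ∀ j k, Commute (p j) (p k)) (x : H) (n : ℕ) :
    ‖partialJoin p n x‖ ^ 2 ≤ ∑ j ∈ range n, ‖p j x‖ ^ 2 := by
  induction n with
  | zero => simp [partialJoin]
  | succ n ih =>
    set J := partialJoin p n
    have hJ : IsStarProjection J := isStarProjection_partialJoin hp hcomm n
    have hsplit : partialJoin p (n + 1) = J + (1 - J) * p n := by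
      rw [sub_mul, one_mul, ← add_sub_assoc]
      rfl
    have horth : ⟪J x, (1 - J) (p n x)⟫_𝕜 = 0 := by
      calc ⟪J x, (1 - J) (p n x)⟫_𝕜 = ⟪x, J ((1 - J) (p n x))⟫_𝕜 :=
            hJ.isSelfAdjoint.isSymmetric _ _
        _ = 0 := by rw [← mul_apply_eq_comp, hJ.mul_one_sub_self]; simp
    rw [hsplit, add_apply, mul_apply_eq_comp, norm_add_sq (𝕜 := 𝕜), horth, map_zero, mul_zero,
      add_zero, sum_range_succ]
    gcongr
    exact hJ.one_sub.norm_apply_le _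

lemma norm_sq_le_tsum_norm_apply_sq {p : ℕ → H →L[𝕜] H} (hp : ∀ j, IsStarProjection (p j))
    (hcomm : ∀ j k, Commute (p j) (p k)) (hsep : ∀ y, (∀ j, p j y = 0) → y = 0) (x : H)
    (hsum : Summable fun j => ‖p j x‖ ^ 2) :
    ‖x‖ ^ 2 ≤ ∑' j, ‖p j x‖ ^ 2 := by
  have hJsep : ∀ y, (∀ n, partialJoin p n y = 0) → y = 0 := fun y hy => hsep y fun j => by
    rw [← partialJoin_succ_mul_self (fun j => (hp j).isIdempotentElem) j,
      (commute_partialJoin hcomm j (j + 1)).symm.eq, mul_apply_eq_comp, hy, map_zero]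
  have hJ := isStarProjection_partialJoin hp hcomm
  have hlim := (tendsto_apply_of_isStarProjection_of_mul_eq hJ
    (fun n => partialJoin_succ_mul_partialJoin hcomm (hJ n).isIdempotentElem) hJsep x).norm.pow 2
  refine le_of_tendsto' hlim fun n => (norm_partialJoin_apply_sq_le hp hcomm x n).trans ?_
  exact hsum.sum_le_tsum _ fun j _ => sq_nonneg _

end Hilbert

lemma natCast_le_abs_sub_of_mod_eq {M j k : ℕ} (hmod : j % M = k % M) (hne : j ≠ k) :
    (M : ℤ) ≤ |(j : ℤ) - k| := by
  have hdvd : (M : ℤ) ∣ |(j : ℤ) - k| := by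
    rw [abs_sub_comm, dvd_abs]
    exact Nat.modEq_iff_dvd.mp hmod
  exact Int.le_of_dvd (abs_pos.mpr (sub_ne_zero.mpr (by exact_mod_cast hne))) hdvd

theorem stmt4 {H : Type*} [NormedAddCommGroup H] [InnerProductSpace ℝ H] [CompleteSpace H]
    (P : ℕ → H →L[ℝ] H) (hsa : ∀ j, IsSelfAdjoint (P j)) (hidem : ∀ j, IsIdempotentElem (P j))
    (hcomm : ∀ j k, (P j) ∘L (P k) = (P k) ∘L (P j))
    (M : ℕ) (hM : 0 < M)
    (horth : ∀ j k : ℕ, (M : ℤ) ≤ |(j : ℤ) - (k : ℤ)| → (P j) ∘L (P k) = 0)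
    (hcomplete : ∀ f : H, (∀ j, P j f = 0) → f = 0) :
    ∀ f : H, ‖f‖ ^ 2 ≤ ∑' j, ‖P j f‖ ^ 2 ∧ ∑' j, ‖P j f‖ ^ 2 ≤ (M : ℝ) * ‖f‖ ^ 2 := by
  intro f
  have hP : ∀ j, IsStarProjection (P j) := fun j => ⟨hidem j, hsa j⟩
  have hbound (s : Finset ℕ) : ∑ j ∈ s, ‖P j f‖ ^ 2 ≤ M * ‖f‖ ^ 2 := by
    simpa using sum_norm_apply_sq_le_card_mul hP (· % M)
      (fun j k hjk hne => horth j k (natCast_le_abs_sub_of_mod_eq hjk hne))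
      (t := range M) (fun j _ => mem_range.mpr (Nat.mod_lt j hM)) f
  have hsum : Summable fun j => ‖P j f‖ ^ 2 :=
    summable_of_sum_range_le (fun _ => sq_nonneg _) fun n => hbound (range n)
  exact ⟨norm_sq_le_tsum_norm_apply_sq hP hcomm hcomplete f hsum,
    Real.tsum_le_of_sum_range_le (fun _ => sq_nonneg _) fun n => hbound (range n)⟩
end

section
/- Let {P_j}_{j∈ℕ} be commuting orthogonal projections with P_j P_k = 0 for |j−k| ≥ M. Define Q_1 = P_1 and inductively Q_n = P_n − P_n Σ_{k<n} Q_k. Then each Q_n is an orthogonal projection and Q_j Q_k = 0 for j ≠ k. -/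
/-!
The recursion unwinds to the closed form `Q n = P n * ∏_{k<n} (1 - P k)`: indeed
`1 - ∑_{k<n+1} Q k = (1 - P n) * (1 - ∑_{k<n} Q k)`. All factors are commuting self-adjoint
idempotents, so each `Q n` is one too, and for `j < n` the product `Q j * Q n` contains the
factor `P j * (1 - P j) = 0`.
-/

open Finset

section

variable {R : Type*} [Ring R] {p q : ℕ → R}

def prodOneSub (p : ℕ → R) (n : ℕ) : R :=
  ((List.range n).map fun k => 1 - p k).prod

lemma prodOneSub_succ (n : ℕ) : prodOneSub p (n + 1) = prodOneSub p n * (1 - p n) :=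
  List.prod_range_succ _ n

lemma commute_prodOneSub {a : R} (ha : ∀ j, Commute a (p j)) (n : ℕ) :
    Commute a (prodOneSub p n) :=
  Commute.list_prod_right _ _ <| by
    simpa using fun k _ => (Commute.one_right a).sub_right (ha k)

lemma commute_prodOneSub_prodOneSub (hp : ∀ j k, Commute (p j) (p k)) (m n : ℕ) :
    Commute (prodOneSub p m) (prodOneSub p n) :=
  commute_prodOneSub (fun j => (commute_prodOneSub (hp j) m).symm) n

lemma commute_prodOneSub_one_sub (hp : ∀ j k, Commute (p j) (p k)) (n : ℕ) :
    Commute (prodOneSub p n) (1 - p n) :=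
  (commute_prodOneSub (fun j => (Commute.one_left _).sub_left (hp n j)) n).symm

lemma isIdempotentElem_prodOneSub (hp : ∀ j k, Commute (p j) (p k))
    (hidem : ∀ j, IsIdempotentElem (p j)) (n : ℕ) : IsIdempotentElem (prodOneSub p n) := by
  induction n with
  | zero => exact IsIdempotentElem.one
  | succ n ih =>
    rw [prodOneSub_succ]
    exact ih.mul_of_commute (commute_prodOneSub_one_sub hp n) (hidem n).one_sub

lemma isSelfAdjoint_prodOneSub [StarRing R] (hp : ∀ j k, Commute (p j) (p k))
    (hsa : ∀ j, IsSelfAdjoint (p j)) (n : ℕ) : IsSelfAdjoint (prodOneSub p n) := by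
  induction n with
  | zero => exact IsSelfAdjoint.one R
  | succ n ih =>
    rw [prodOneSub_succ]
    have h1 : IsSelfAdjoint (1 - p n) := (IsSelfAdjoint.one R).sub (hsa n)
    exact (ih.commute_iff h1).mp (commute_prodOneSub_one_sub hp n)

lemma mul_prodOneSub_eq_zero (hp : ∀ j k, Commute (p j) (p k))
    (hidem : ∀ j, IsIdempotentElem (p j)) {j n : ℕ} (hjn : j < n) :
    p j * prodOneSub p n = 0 := by
  induction n, hjn using Nat.le_induction with
  | base =>
    rw [prodOneSub_succ, ← mul_assoc, (commute_prodOneSub (hp j) j).eq, mul_assoc,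
      (hidem j).mul_one_sub_self, mul_zero]
  | succ n _ ih => rw [prodOneSub_succ, ← mul_assoc, ih, zero_mul]

lemma one_sub_sum_eq_prodOneSub (hp : ∀ j k, Commute (p j) (p k))
    (hq : ∀ n, q n = p n - p n * ∑ k ∈ range n, q k) (n : ℕ) :
    1 - ∑ k ∈ range n, q k = prodOneSub p n := by
  induction n with
  | zero => simp [prodOneSub]
  | succ n ih =>
    rw [sum_range_succ, ← sub_sub, ih, hq n, ← mul_one_sub, ih, prodOneSub_succ, mul_one_sub,
      (commute_prodOneSub (hp n) n).eq]

/-- The noncommutative analogue of `disjointed`: `p n` with everything below `n` removed. -/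
def orthDisjointed (p : ℕ → R) (n : ℕ) : R :=
  p n * prodOneSub p n

lemma eq_orthDisjointed (hp : ∀ j k, Commute (p j) (p k))
    (hq : ∀ n, q n = p n - p n * ∑ k ∈ range n, q k) (n : ℕ) : q n = orthDisjointed p n := by
  rw [hq n, ← mul_one_sub, one_sub_sum_eq_prodOneSub hp hq, orthDisjointed]

lemma isIdempotentElem_orthDisjointed (hp : ∀ j k, Commute (p j) (p k))
    (hidem : ∀ j, IsIdempotentElem (p j)) (n : ℕ) : IsIdempotentElem (orthDisjointed p n) :=
  (hidem n).mul_of_commute (commute_prodOneSub (hp n) n) (isIdempotentElem_prodOneSub hp hidem n)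

lemma isSelfAdjoint_orthDisjointed [StarRing R] (hp : ∀ j k, Commute (p j) (p k))
    (hsa : ∀ j, IsSelfAdjoint (p j)) (n : ℕ) : IsSelfAdjoint (orthDisjointed p n) :=
  ((hsa n).commute_iff (isSelfAdjoint_prodOneSub hp hsa n)).mp (commute_prodOneSub (hp n) n)

lemma commute_orthDisjointed (hp : ∀ j k, Commute (p j) (p k)) (m n : ℕ) :
    Commute (orthDisjointed p m) (orthDisjointed p n) :=
  ((hp m n).mul_right (commute_prodOneSub (hp m) n)).mul_left
    ((commute_prodOneSub (hp n) m).symm.mul_right (commute_prodOneSub_prodOneSub hp m n))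

lemma orthDisjointed_mul_orthDisjointed_of_lt (hp : ∀ j k, Commute (p j) (p k))
    (hidem : ∀ j, IsIdempotentElem (p j)) {j n : ℕ} (hjn : j < n) :
    orthDisjointed p j * orthDisjointed p n = 0 := by
  rw [orthDisjointed, orthDisjointed, (commute_prodOneSub (hp n) j).symm.mul_mul_mul_comm,
    (hp j n).eq, (commute_prodOneSub_prodOneSub hp j n).eq, mul_assoc, ← mul_assoc (p j),
    mul_prodOneSub_eq_zero hp hidem hjn, zero_mul, mul_zero]

lemma orthogonalIdempotents_orthDisjointed (hp : ∀ j k, Commute (p j) (p k))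
    (hidem : ∀ j, IsIdempotentElem (p j)) : OrthogonalIdempotents (orthDisjointed p) where
  idem := isIdempotentElem_orthDisjointed hp hidem
  ortho j k hjk := by
    rcases hjk.lt_or_gt with hlt | hgt
    · exact orthDisjointed_mul_orthDisjointed_of_lt hp hidem hlt
    · rw [(commute_orthDisjointed hp j k).eq]
      exact orthDisjointed_mul_orthDisjointed_of_lt hp hidem hgt
end

theorem stmt5_general {H : Type*} [NormedAddCommGroup H] [InnerProductSpace ℝ H] [CompleteSpace H]
    (P : ℕ → H →L[ℝ] H) (hsa : ∀ j, IsSelfAdjoint (P j)) (hidem : ∀ j, IsIdempotentElem (P j))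
    (hcomm : ∀ j k, (P j) ∘L (P k) = (P k) ∘L (P j))
    (Q : ℕ → H →L[ℝ] H)
    (hQ : ∀ n, Q n = P n - (P n) ∘L (∑ k ∈ Finset.range n, Q k)) :
    (∀ n, IsSelfAdjoint (Q n) ∧ IsIdempotentElem (Q n)) ∧
    (∀ j k, j ≠ k → (Q j) ∘L (Q k) = 0) := by
  have hP : ∀ j k, Commute (P j) (P k) := hcomm
  obtain rfl : Q = orthDisjointed P := funext (eq_orthDisjointed hP hQ)
  exact ⟨fun n => ⟨isSelfAdjoint_orthDisjointed hP hsa n,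
    isIdempotentElem_orthDisjointed hP hidem n⟩, (orthogonalIdempotents_orthDisjointed hP hidem).ortho⟩

theorem stmt5 {H : Type*} [NormedAddCommGroup H] [InnerProductSpace ℝ H] [CompleteSpace H]
    (P : ℕ → H →L[ℝ] H) (hsa : ∀ j, IsSelfAdjoint (P j)) (hidem : ∀ j, IsIdempotentElem (P j))
    (hcomm : ∀ j k, (P j) ∘L (P k) = (P k) ∘L (P j))
    (M : ℕ) (hM : 0 < M)
    (horth : ∀ j k : ℕ, (M : ℤ) ≤ |(j : ℤ) - (k : ℤ)| → (P j) ∘L (P k) = 0)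
    (Q : ℕ → H →L[ℝ] H)
    (hQ : ∀ n, Q n = P n - (P n) ∘L (∑ k ∈ Finset.range n, Q k)) :
    (∀ n, IsSelfAdjoint (Q n) ∧ IsIdempotentElem (Q n)) ∧
    (∀ j k, j ≠ k → (Q j) ∘L (Q k) = 0) :=
  stmt5_general P hsa hidem hcomm Q hQ
end

section
/- Let {P_j}_{j∈ℕ} be commuting orthogonal projections with P_j P_k = 0 for |j−k| ≥ M, and define Q_1 = P_1, Q_n = P_n − P_n Σ_{k<n} Q_k. Then for every f ∈ H and every n, Σ_{j≤n} ‖Q_j f‖² ≤ Σ_{j≤n} ‖P_j f‖². -/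
/-!
Writing `S n = ∑ k < n, Q k`, the recursion reads `S (n + 1) = P n + S n - P n * S n`, the join of
two commuting orthogonal projections. Hence every `S n` is an orthogonal projection commuting with
all `P j`, and `Q n = (1 - S n) * P n`, so `‖Q n f‖ ≤ ‖P n f‖` term by term, as `1 - S n` is an
orthogonal projection and has norm at most `1`.
-/

open Finset

section Ring

variable {R : Type*} [Ring R] [StarRing R] {P Q : ℕ → R}

theorem isStarProjection_and_commute_sum_range_of_join
    (hP : ∀ j, IsStarProjection (P j)) (hcomm : ∀ j k, Commute (P j) (P k))
    (hQ : ∀ n, Q n = P n - P n * ∑ k ∈ range n, Q k) (n : ℕ) :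
    IsStarProjection (∑ k ∈ range n, Q k) ∧ ∀ j, Commute (P j) (∑ k ∈ range n, Q k) := by
  induction n with
  | zero =>
    simp only [range_zero, sum_empty]
    exact ⟨IsStarProjection.zero R, fun j => Commute.zero_right (P j)⟩
  | succ n ih =>
    obtain ⟨hS, hPS⟩ := ih
    have hjoin : ∑ k ∈ range (n + 1), Q k =
        P n + ∑ k ∈ range n, Q k - P n * ∑ k ∈ range n, Q k := by
      rw [sum_range_succ, hQ n]
      abel
    rw [hjoin]
    exact ⟨(hP n).add_sub_mul_of_commute (hPS n) hS,
      fun j => ((hcomm j n).add_right (hPS j)).sub_right ((hcomm j n).mul_right (hPS j))⟩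

theorem eq_one_sub_sum_range_mul_of_join
    (hP : ∀ j, IsStarProjection (P j)) (hcomm : ∀ j k, Commute (P j) (P k))
    (hQ : ∀ n, Q n = P n - P n * ∑ k ∈ range n, Q k) (n : ℕ) :
    Q n = (1 - ∑ k ∈ range n, Q k) * P n := by
  rw [hQ n, sub_mul, one_mul,
    ((isStarProjection_and_commute_sum_range_of_join hP hcomm hQ n).2 n).eq]

end Ring

theorem IsStarProjection.norm_apply_le_s6 {𝕜 E : Type*} [RCLike 𝕜]
    [NormedAddCommGroup E] [InnerProductSpace 𝕜 E] [CompleteSpace E] {p : E →L[𝕜] E}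
    (hp : IsStarProjection p) (x : E) : ‖p x‖ ≤ ‖x‖ :=
  p.le_of_opNorm_le (hp.norm_le p) x |>.trans_eq (one_mul _)

theorem stmt6_general {H : Type*} [NormedAddCommGroup H] [InnerProductSpace ℝ H] [CompleteSpace H]
    (P : ℕ → H →L[ℝ] H) (hsa : ∀ j, IsSelfAdjoint (P j)) (hidem : ∀ j, IsIdempotentElem (P j))
    (hcomm : ∀ j k, (P j) ∘L (P k) = (P k) ∘L (P j))
    (Q : ℕ → H →L[ℝ] H)
    (hQ : ∀ n, Q n = P n - (P n) ∘L (∑ k ∈ Finset.range n, Q k)) :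
    ∀ (f : H) (n : ℕ),
      ∑ j ∈ Finset.range (n + 1), ‖Q j f‖ ^ 2 ≤ ∑ j ∈ Finset.range (n + 1), ‖P j f‖ ^ 2 := by
  intro f n
  have hP : ∀ j, IsStarProjection (P j) := fun j => ⟨hidem j, hsa j⟩
  have hQ_eq (j : ℕ) := eq_one_sub_sum_range_mul_of_join hP hcomm hQ j
  have hS (j : ℕ) := (isStarProjection_and_commute_sum_range_of_join hP hcomm hQ j).1
  refine sum_le_sum fun j _ => pow_le_pow_left₀ (norm_nonneg _) ?_ 2
  rw [hQ_eq j]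
  exact (hS j).one_sub.norm_apply_le_s6 _

theorem stmt6 {H : Type*} [NormedAddCommGroup H] [InnerProductSpace ℝ H] [CompleteSpace H]
    (P : ℕ → H →L[ℝ] H) (hsa : ∀ j, IsSelfAdjoint (P j)) (hidem : ∀ j, IsIdempotentElem (P j))
    (hcomm : ∀ j k, (P j) ∘L (P k) = (P k) ∘L (P j))
    (M : ℕ) (hM : 0 < M)
    (horth : ∀ j k : ℕ, (M : ℤ) ≤ |(j : ℤ) - (k : ℤ)| → (P j) ∘L (P k) = 0)
    (Q : ℕ → H →L[ℝ] H)
    (hQ : ∀ n, Q n = P n - (P n) ∘L (∑ k ∈ Finset.range n, Q k)) :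
    ∀ (f : H) (n : ℕ),
      ∑ j ∈ Finset.range (n + 1), ‖Q j f‖ ^ 2 ≤ ∑ j ∈ Finset.range (n + 1), ‖P j f‖ ^ 2 :=
  stmt6_general P hsa hidem hcomm Q hQ
end

section
/- Let D be a bounded diagonal operator on ℓ²(ℕ) and {I_j}_{j∈ℕ} ⊂ ℕ with |I_j| ≤ L, ∪_j I_j = ℕ, and I_j ∩ I_k = ∅ for |j−k| > M. Let D_j be the submatrix of D indexed by I_j, and for each j let G_j ⊂ ℓ²(ℕ) consist of vectors supported in I_j such that {D_j^n g : g ∈ G_j, 0 ≤ n < L} is a frame for ℓ²(I_j) with bounds α, β independent of j. Then {D^n g : 0 ≤ n < L, g ∈ ∪_j G_j} is a frame for ℓ²(ℕ). -/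
/-!
Write `c j = ∑_{i ∈ I j} f(i)²` for the energy of `f` on the block `I j`. Since the blocks
cover `ℕ` and each index lies in at most `2M + 1` of them, `‖f‖² ≤ ∑ⱼ c j ≤ (2M + 1) ‖f‖²`.
Each `g ∈ G j` is supported in `I j`, so `⟨f, Dⁿ g⟩ = ⟨f|_{I j}, D_jⁿ g⟩`, and the local frame
inequalities bound the contribution of `G j` between `α c j` and `β c j`. Summing over `j`
gives the frame bounds `α` and `β (2M + 1)`.
-/

open Finset

section BlockCover

variable {ι : Type*} [DecidableEq ι] (I : ℕ → Finset ι)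

theorem card_filter_mem_le_of_disjoint_of_lt_dist (M : ℕ)
    (hdisj : ∀ j k : ℕ, (M : ℤ) < |(j : ℤ) - (k : ℤ)| → Disjoint (I j) (I k))
    (J : Finset ℕ) (i : ι) : #{j ∈ J | i ∈ I j} ≤ 2 * M + 1 := by
  rcases (J.filter fun j => i ∈ I j).eq_empty_or_nonempty with h | ⟨j₀, hj₀⟩
  · simp [h]
  obtain ⟨-, hij₀⟩ := mem_filter.mp hj₀
  have hsub : {j ∈ J | i ∈ I j} ⊆ Icc (j₀ - M) (j₀ + M) := by
    intro j hj
    obtain ⟨-, hij⟩ := mem_filter.mp hj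
    by_contra hfar
    simp only [mem_Icc, not_and_or, not_le] at hfar
    have hdist : (M : ℤ) < |(j : ℤ) - (j₀ : ℤ)| := by rw [lt_abs]; omega
    exact disjoint_left.mp (hdisj j j₀ hdist) hij hij₀
  calc #{j ∈ J | i ∈ I j} ≤ #(Icc (j₀ - M) (j₀ + M)) := card_le_card hsub
    _ ≤ 2 * M + 1 := by rw [Nat.card_Icc]; omega

theorem sum_sum_eq_sum_biUnion_card_filter_mul (h : ι → ℝ) (J : Finset ℕ) :
    ∑ j ∈ J, ∑ i ∈ I j, h i = ∑ i ∈ J.biUnion I, (#{j ∈ J | i ∈ I j} : ℝ) * h i := by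
  have hblock : ∀ j ∈ J, ∑ i ∈ I j, h i = ∑ i ∈ J.biUnion I, if i ∈ I j then h i else 0 := by
    intro j hj
    rw [sum_ite_mem, inter_eq_right.mpr (subset_biUnion_of_mem I hj)]
  rw [sum_congr rfl hblock, sum_comm]
  refine sum_congr rfl fun i _ => ?_
  rw [sum_ite, sum_const_zero, add_zero, sum_const, nsmul_eq_mul]

variable {I} {h : ι → ℝ}

theorem sum_sum_le_mul_tsum (hh : 0 ≤ h) {m : ℕ}
    (hmult : ∀ (J : Finset ℕ) (i : ι), #{j ∈ J | i ∈ I j} ≤ m) (hs : Summable h)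
    (J : Finset ℕ) : ∑ j ∈ J, ∑ i ∈ I j, h i ≤ m * ∑' i, h i := by
  calc ∑ j ∈ J, ∑ i ∈ I j, h i = ∑ i ∈ J.biUnion I, (#{j ∈ J | i ∈ I j} : ℝ) * h i :=
        sum_sum_eq_sum_biUnion_card_filter_mul I h J
    _ ≤ ∑ i ∈ J.biUnion I, (m : ℝ) * h i :=
        sum_le_sum fun i _ => mul_le_mul_of_nonneg_right (by exact_mod_cast hmult J i) (hh i)
    _ = m * ∑ i ∈ J.biUnion I, h i := (mul_sum _ _ _).symm
    _ ≤ m * ∑' i, h i :=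
        mul_le_mul_of_nonneg_left (hs.sum_le_tsum _ fun i _ => hh i) m.cast_nonneg

theorem summable_sum_and_tsum_sum_le_mul_tsum (hh : 0 ≤ h) {m : ℕ}
    (hmult : ∀ (J : Finset ℕ) (i : ι), #{j ∈ J | i ∈ I j} ≤ m) (hs : Summable h) :
    Summable (fun j => ∑ i ∈ I j, h i) ∧ ∑' j, ∑ i ∈ I j, h i ≤ m * ∑' i, h i :=
  have hbound := sum_sum_le_mul_tsum hh hmult hs
  have hnonneg : 0 ≤ fun j => ∑ i ∈ I j, h i := fun _ => sum_nonneg fun i _ => hh i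
  ⟨summable_of_sum_le hnonneg hbound, Real.tsum_le_of_sum_le hnonneg hbound⟩

theorem tsum_le_tsum_sum_of_cover (hh : 0 ≤ h) (hcover : ∀ i, ∃ j, i ∈ I j)
    (hs : Summable fun j => ∑ i ∈ I j, h i) : ∑' i, h i ≤ ∑' j, ∑ i ∈ I j, h i := by
  refine Real.tsum_le_of_sum_le hh fun s => ?_
  choose block hblock using hcover
  set J := s.image block
  have hsub : s ⊆ J.biUnion I := fun i hi =>
    mem_biUnion.mpr ⟨block i, mem_image_of_mem _ hi, hblock i⟩
  calc ∑ i ∈ s, h i ≤ ∑ i ∈ J.biUnion I, h i :=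
        sum_le_sum_of_subset_of_nonneg hsub fun i _ _ => hh i
    _ ≤ ∑ i ∈ J.biUnion I, (#{j ∈ J | i ∈ I j} : ℝ) * h i := by
        refine sum_le_sum fun i hi => le_mul_of_one_le_left (hh i) ?_
        obtain ⟨j, hjJ, hij⟩ := mem_biUnion.mp hi
        exact_mod_cast card_pos.mpr ⟨j, mem_filter.mpr ⟨hjJ, hij⟩⟩
    _ = ∑ j ∈ J, ∑ i ∈ I j, h i := (sum_sum_eq_sum_biUnion_card_filter_mul I h J).symm
    _ ≤ ∑' j, ∑ i ∈ I j, h i := hs.sum_le_tsum J fun j _ => sum_nonneg fun i _ => hh i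

end BlockCover

theorem tsum_sigma_bounds {κ : Type*} {γ : κ → Type*} {F : (Σ j, γ j) → ℝ} (hF : ∀ p, 0 ≤ F p)
    {c : κ → ℝ} (hc : Summable c) {a b : ℝ} (hfiber : ∀ j, Summable fun x => F ⟨j, x⟩)
    (hlower : ∀ j, a * c j ≤ ∑' x, F ⟨j, x⟩) (hupper : ∀ j, ∑' x, F ⟨j, x⟩ ≤ b * c j) :
    a * ∑' j, c j ≤ ∑' p, F p ∧ ∑' p, F p ≤ b * ∑' j, c j := by
  have hfibers : Summable fun j => ∑' x, F ⟨j, x⟩ :=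
    (hc.mul_left b).of_nonneg_of_le (fun j => tsum_nonneg fun x => hF _) hupper
  rw [(summable_sigma_of_nonneg hF).mpr ⟨hfiber, hfibers⟩ |>.tsum_sigma' hfiber,
    ← tsum_mul_left, ← tsum_mul_left]
  exact ⟨(hc.mul_left a).tsum_le_tsum hlower hfibers, hfibers.tsum_le_tsum hupper (hc.mul_left b)⟩

/-- `∑_{n < L} ⟨f, Dⁿ g⟩²` with the inner products taken over the block `s`. -/
def blockPowerEnergy (d : ℕ → ℝ) (L : ℕ) (s : Finset ℕ) (f g : ℕ → ℝ) : ℝ :=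
  ∑ n ∈ range L, (∑ i ∈ s, f i * (d i ^ n * g i)) ^ 2

theorem blockPowerEnergy_nonneg (d : ℕ → ℝ) (L : ℕ) (s : Finset ℕ) (f g : ℕ → ℝ) :
    0 ≤ blockPowerEnergy d L s f g :=
  sum_nonneg fun _ _ => sq_nonneg _

theorem blockPowerEnergy_congr {d : ℕ → ℝ} {L : ℕ} {s : Finset ℕ} {f f' : ℕ → ℝ}
    (hf : ∀ i ∈ s, f i = f' i) (g : ℕ → ℝ) :
    blockPowerEnergy d L s f g = blockPowerEnergy d L s f' g := by
  unfold blockPowerEnergy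
  exact sum_congr rfl fun n _ => by rw [sum_congr rfl fun i hi => by rw [hf i hi]]

section LocalFrame

variable {d : ℕ → ℝ} {L : ℕ} {s : Finset ℕ} {G : Set (ℕ → ℝ)} {α β : ℝ}

theorem frameBounds_of_supported
    (hlocal : ∀ f : ℕ → ℝ, (∀ i, i ∉ s → f i = 0) →
      α * ∑ i ∈ s, f i ^ 2 ≤ ∑' g : G, blockPowerEnergy d L s f g ∧
      ∑' g : G, blockPowerEnergy d L s f g ≤ β * ∑ i ∈ s, f i ^ 2) (f : ℕ → ℝ) :
    α * ∑ i ∈ s, f i ^ 2 ≤ ∑' g : G, blockPowerEnergy d L s f g ∧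
      ∑' g : G, blockPowerEnergy d L s f g ≤ β * ∑ i ∈ s, f i ^ 2 := by
  have hrestrict : ∀ i ∈ s, (if i ∈ s then f i else 0) = f i := fun i hi => if_pos hi
  have hnorm : ∑ i ∈ s, (if i ∈ s then f i else 0) ^ 2 = ∑ i ∈ s, f i ^ 2 :=
    sum_congr rfl fun i hi => by rw [hrestrict i hi]
  have h := hlocal (fun i => if i ∈ s then f i else 0) fun i hi => if_neg hi
  simpa only [hnorm, blockPowerEnergy_congr hrestrict] using h

/-- A positive lower frame bound forces the energies to be summable: otherwise their `tsum` is the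
junk value `0`, so `f` vanishes on `s` and every energy is `0`. -/
theorem summable_blockPowerEnergy_of_lower (hα : 0 < α) {f : ℕ → ℝ}
    (hlower : α * ∑ i ∈ s, f i ^ 2 ≤ ∑' g : G, blockPowerEnergy d L s f g) :
    Summable fun g : G => blockPowerEnergy d L s f g := by
  by_contra hS
  rw [tsum_eq_zero_of_not_summable hS] at hlower
  have henergy : ∑ i ∈ s, f i ^ 2 = 0 :=
    le_antisymm (nonpos_of_mul_nonpos_right hlower hα) (sum_nonneg fun i _ => sq_nonneg _)
  have hzero : ∀ i ∈ s, f i = 0 := fun i hi => pow_eq_zero_iff two_ne_zero |>.mp <|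
    (sum_eq_zero_iff_of_nonneg fun i _ => sq_nonneg _).mp henergy i hi
  apply hS
  simp only [blockPowerEnergy_congr hzero]
  simp [blockPowerEnergy]

end LocalFrame

theorem stmt16_general (d : ℕ → ℝ)
    (L M : ℕ)
    (I : ℕ → Finset ℕ)
    (hcover : ∀ n : ℕ, ∃ j, n ∈ I j)
    (hdisj : ∀ j k : ℕ, (M : ℤ) < |(j : ℤ) - (k : ℤ)| → Disjoint (I j) (I k))
    (G : ℕ → Set (ℕ → ℝ))
    (hGsupp : ∀ j, ∀ g ∈ G j, ∀ i, i ∉ I j → g i = 0)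
    (α β : ℝ) (hα : 0 < α) (hβ : 0 < β)
    (hlocal : ∀ j, ∀ f : ℕ → ℝ, (∀ i, i ∉ I j → f i = 0) →
      α * ∑ i ∈ I j, f i ^ 2 ≤
        ∑' g : G j, ∑ n ∈ Finset.range L,
          (∑ i ∈ I j, f i * (d i ^ n * (g : ℕ → ℝ) i)) ^ 2 ∧
      ∑' g : G j, ∑ n ∈ Finset.range L,
          (∑ i ∈ I j, f i * (d i ^ n * (g : ℕ → ℝ) i)) ^ 2 ≤
        β * ∑ i ∈ I j, f i ^ 2) :
    ∃ A B : ℝ, 0 < A ∧ 0 < B ∧ ∀ f : ℕ → ℝ, Summable (fun i => f i ^ 2) →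
      A * ∑' i, f i ^ 2 ≤
        ∑' p : Σ j : ℕ, G j, ∑ n ∈ Finset.range L,
          (∑' i : ℕ, f i * (d i ^ n * (p.2 : ℕ → ℝ) i)) ^ 2 ∧
      ∑' p : Σ j : ℕ, G j, ∑ n ∈ Finset.range L,
          (∑' i : ℕ, f i * (d i ^ n * (p.2 : ℕ → ℝ) i)) ^ 2 ≤
        B * ∑' i, f i ^ 2 := by
  refine ⟨α, β * (2 * M + 1 : ℕ), hα, by positivity, fun f hf => ?_⟩
  have hsq : 0 ≤ fun i => f i ^ 2 := fun i => sq_nonneg (f i)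
  obtain ⟨hblocks, hblocks_le⟩ := summable_sum_and_tsum_sum_le_mul_tsum hsq
    (card_filter_mem_le_of_disjoint_of_lt_dist I M hdisj) hf
  have hle_blocks := tsum_le_tsum_sum_of_cover hsq hcover hblocks
  have hframe j := frameBounds_of_supported (d := d) (L := L) (G := G j) (hlocal j) f
  have hsupp (p : Σ j : ℕ, G j) : ∑ n ∈ Finset.range L,
      (∑' i : ℕ, f i * (d i ^ n * (p.2 : ℕ → ℝ) i)) ^ 2 = blockPowerEnergy d L (I p.1) f p.2 :=
    sum_congr rfl fun n _ => congrArg (· ^ 2) <|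
      tsum_eq_sum fun i hi => by rw [hGsupp p.1 p.2 p.2.2 i hi, mul_zero, mul_zero]
  simp only [hsupp]
  have hsummable (j : ℕ) : Summable fun g : G j => blockPowerEnergy d L (I j) f g :=
    summable_blockPowerEnergy_of_lower hα (hframe j).1
  obtain ⟨hlower, hupper⟩ :=
    tsum_sigma_bounds (F := fun p : Σ j, G j => blockPowerEnergy d L (I p.1) f p.2)
      (fun p => blockPowerEnergy_nonneg d L (I p.1) f p.2) hblocks hsummable
      (fun j => (hframe j).1) (fun j => (hframe j).2)
  exact ⟨(mul_le_mul_of_nonneg_left hle_blocks hα.le).trans hlower,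
    hupper.trans (by rw [mul_assoc]; exact mul_le_mul_of_nonneg_left hblocks_le hβ.le)⟩

theorem stmt16 (d : ℕ → ℝ) (hd : ∃ C : ℝ, ∀ i, |d i| ≤ C)
    (L M : ℕ) (hL : 0 < L)
    (I : ℕ → Finset ℕ) (hcard : ∀ j, (I j).card ≤ L)
    (hcover : ∀ n : ℕ, ∃ j, n ∈ I j)
    (hdisj : ∀ j k : ℕ, (M : ℤ) < |(j : ℤ) - (k : ℤ)| → Disjoint (I j) (I k))
    (G : ℕ → Set (ℕ → ℝ)) (hGcount : ∀ j, (G j).Countable)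
    (hGsupp : ∀ j, ∀ g ∈ G j, ∀ i, i ∉ I j → g i = 0)
    (α β : ℝ) (hα : 0 < α) (hβ : 0 < β)
    (hlocal : ∀ j, ∀ f : ℕ → ℝ, (∀ i, i ∉ I j → f i = 0) →
      α * ∑ i ∈ I j, f i ^ 2 ≤
        ∑' g : G j, ∑ n ∈ Finset.range L,
          (∑ i ∈ I j, f i * (d i ^ n * (g : ℕ → ℝ) i)) ^ 2 ∧
      ∑' g : G j, ∑ n ∈ Finset.range L,
          (∑ i ∈ I j, f i * (d i ^ n * (g : ℕ → ℝ) i)) ^ 2 ≤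
        β * ∑ i ∈ I j, f i ^ 2) :
    ∃ A B : ℝ, 0 < A ∧ 0 < B ∧ ∀ f : ℕ → ℝ, Summable (fun i => f i ^ 2) →
      A * ∑' i, f i ^ 2 ≤
        ∑' p : Σ j : ℕ, G j, ∑ n ∈ Finset.range L,
          (∑' i : ℕ, f i * (d i ^ n * (p.2 : ℕ → ℝ) i)) ^ 2 ∧
      ∑' p : Σ j : ℕ, G j, ∑ n ∈ Finset.range L,
          (∑' i : ℕ, f i * (d i ^ n * (p.2 : ℕ → ℝ) i)) ^ 2 ≤
        B * ∑' i, f i ^ 2 :=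
  stmt16_general d L M I hcover hdisj G hGsupp α β hα hβ hlocal
end
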